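/- arXiv:2501.16560 — 4 statements merged into one kernel-verified Lean document; each statement's English description precedes it below -/
import Mathlib

section
/- Assume G_d < G. If (k_t, p_t)_{t≥0} and (k'_t, p'_t)_{t≥0} are both asymptotically bubbly equilibria with the same initial capital and the same dividends, then k_t = k'_t and p_t = p'_t for all t. Moreover, if (k_t, p_t) is an asymptotically bubbly equilibrium and (k'_t, p'_t) is any equilibrium with the same initial capital and dividends, then p'_0 ≤ p_0. -/
/-!
Let `(k, p)` be asymptotically bubbly and `(k', p')` an equilibrium with `p' 0 > p 0`. A higher
price crowds out capital, so `k' ≤ k` and the returns `R = f' ∘ k` satisfy `R ≤ R'`; the gap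
`δ t = p' t - p t` then obeys `δ (t+1) ≥ (R' (t+1) / G) δ t`, so `δ t ≥ (∏ R' / G) δ 0`. The
bubble grows like the cumulative detrended return, `b t = b 0 ∏ R / G`, so asymptotic bubbliness
keeps `∏ R / G ≥ c > 0`, and eventually `δ t ≥ c δ 0`. Prices are bounded by the wage at the
capital bound, so `∏ R' / G` is bounded; hence `∏ R' / R` is bounded, which forces `R' / R → 1`,
and `R'` is eventually bounded, which keeps `k'` away from `0`. At a cluster point of
`(k t, k (t+1), k' t, k' (t+1))` the two paths coincide, so the price gap, a continuous function
of these four capitals, vanishes there, contradicting `δ t ≥ c δ 0`.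

So an asymptotically bubbly equilibrium has the largest initial price, two of them have the same
initial price, and the initial price determines the path because asset demand is strictly
decreasing in next period's capital.
-/

open Filter Topology Set

noncomputable section

/-- Standing assumptions on the production function `f` with derivative `f'` and
second derivative `f''`: `f : (0,∞) → (0,∞)` is twice continuously differentiable,
`f' > 0`, `f'' < 0`, `f'(k) → ∞` as `k → 0+`, and `lim_{k→∞} f'(k) < G`. -/
def ProdAssump (G : ℝ) (f f' f'' : ℝ → ℝ) : Prop :=
  0 < G ∧
  (∀ k > (0:ℝ), 0 < f k) ∧
  (∀ k > (0:ℝ), HasDerivAt f (f' k) k) ∧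
  (∀ k > (0:ℝ), HasDerivAt f' (f'' k) k) ∧
  ContinuousOn f'' (Ioi 0) ∧
  (∀ k > (0:ℝ), 0 < f' k) ∧
  (∀ k > (0:ℝ), f'' k < 0) ∧
  Tendsto f' (nhdsWithin 0 (Ioi 0)) atTop ∧
  (∃ L < G, Tendsto f' atTop (nhds L))

/-- Standing assumptions on the savings function: continuous, `0 < s(w,R) < w`,
strictly increasing in `w`, nondecreasing in `R`. -/
def SavAssump (s : ℝ → ℝ → ℝ) : Prop :=
  ContinuousOn (fun wR : ℝ × ℝ => s wR.1 wR.2) (Ioi 0 ×ˢ Ioi 0) ∧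
  (∀ w > (0:ℝ), ∀ R > (0:ℝ), 0 < s w R ∧ s w R < w) ∧
  (∀ R > (0:ℝ), StrictMonoOn (fun w => s w R) (Ioi 0)) ∧
  (∀ w > (0:ℝ), MonotoneOn (fun R => s w R) (Ioi 0))

/-- The savings function arises from a continuous, quasi-concave, strictly increasing
utility `U` on `(0,∞)²`: `s w R` is the unique maximizer of `σ ↦ U (w - σ) (R σ)`
over `(0, w)`. -/
def SavFromUtility (s : ℝ → ℝ → ℝ) : Prop :=
  ∃ U : ℝ → ℝ → ℝ,
    ContinuousOn (fun c : ℝ × ℝ => U c.1 c.2) (Ioi 0 ×ˢ Ioi 0) ∧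
    QuasiconcaveOn ℝ (Ioi 0 ×ˢ Ioi 0) (fun c : ℝ × ℝ => U c.1 c.2) ∧
    (∀ c c' : ℝ × ℝ, c ∈ Ioi (0:ℝ) ×ˢ Ioi (0:ℝ) → c' ∈ Ioi (0:ℝ) ×ˢ Ioi (0:ℝ) →
      c.1 ≤ c'.1 → c.2 ≤ c'.2 → c ≠ c' → U c.1 c.2 < U c'.1 c'.2) ∧
    (∀ w > (0:ℝ), ∀ R > (0:ℝ), s w R ∈ Ioo 0 w ∧
      ∀ σ ∈ Ioo (0:ℝ) w, σ ≠ s w R → U (w - σ) (R * σ) < U (w - s w R) (R * s w R))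

/-- An equilibrium: sequences `k, p` with `k t > 0`, `p t ≥ 0`, `k 0 = k₀`,
the capital accumulation equation and the no-arbitrage price equation. -/
def IsEquilibrium (G : ℝ) (f f' : ℝ → ℝ) (s : ℝ → ℝ → ℝ) (k0 : ℝ) (d : ℕ → ℝ)
    (k p : ℕ → ℝ) : Prop :=
  (∀ t, 0 < k t) ∧ (∀ t, 0 ≤ p t) ∧ k 0 = k0 ∧
  (∀ t, G * k (t + 1) + p t = s (f (k t) - k t * f' (k t)) (f' (k (t + 1)))) ∧
  (∀ t, p (t + 1) = f' (k (t + 1)) / G * p t - d (t + 1))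

/-- Arrow–Debreu date-0 price `q_t = 1/(R_1 ⋯ R_t)` where `R_t = f'(k_t)`. -/
def qseq (f' : ℝ → ℝ) (k : ℕ → ℝ) (t : ℕ) : ℝ :=
  (∏ i ∈ Finset.range t, f' (k (i + 1)))⁻¹

/-- Undetrended dividend `D_t = G^t d_t`. -/
def Dseq (G : ℝ) (d : ℕ → ℝ) (t : ℕ) : ℝ := G ^ t * d t

/-- Detrended fundamental value `v_t = G^{-t} q_t^{-1} ∑_{s>t} q_s D_s`. -/
def fundval (G : ℝ) (f' : ℝ → ℝ) (k : ℕ → ℝ) (d : ℕ → ℝ) (t : ℕ) : ℝ :=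
  (G ^ t)⁻¹ * (qseq f' k t)⁻¹ * ∑' n : ℕ, qseq f' k (t + 1 + n) * Dseq G d (t + 1 + n)

/-- Detrended bubble component `b_t = p_t - v_t`. -/
def bubble (G : ℝ) (f' : ℝ → ℝ) (k p : ℕ → ℝ) (d : ℕ → ℝ) (t : ℕ) : ℝ :=
  p t - fundval G f' k d t

/-- An equilibrium is bubbleless if `b_t = 0` for all `t`. -/
def Bubbleless (G : ℝ) (f' : ℝ → ℝ) (k p : ℕ → ℝ) (d : ℕ → ℝ) : Prop :=
  ∀ t, bubble G f' k p d t = 0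

/-- An equilibrium is asymptotically bubbly if `liminf_{t→∞} b_t > 0`. -/
def AsympBubbly (G : ℝ) (f' : ℝ → ℝ) (k p : ℕ → ℝ) (d : ℕ → ℝ) : Prop :=
  0 < atTop.liminf (bubble G f' k p d)

/-- Long-run dividend growth rate `G_d = limsup_{t→∞} D_t^{1/t}` (as an extended real). -/
def GdGrowth (G : ℝ) (d : ℕ → ℝ) : EReal :=
  atTop.limsup (fun t : ℕ => ((Dseq G d t ^ ((t : ℝ)⁻¹) : ℝ) : EReal))

/-- `x` solves the equation `G x + p = s(f(k) - k f'(k), f'(x))` with `x > 0`;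
when the solution exists it is unique and denoted `g(k,p)`. -/
def IsGsol (G : ℝ) (f f' : ℝ → ℝ) (s : ℝ → ℝ → ℝ) (k p x : ℝ) : Prop :=
  0 < x ∧ G * x + p = s (f k - k * f' k) (f' x)

/-- Set of positive steady states: `𝒦 = {k > 0 : g(k,0) = k}`. -/
def Ksteady (G : ℝ) (f f' : ℝ → ℝ) (s : ℝ → ℝ → ℝ) : Set ℝ :=
  {k : ℝ | 0 < k ∧ IsGsol G f f' s k 0 k}

/-- The equilibrium set `𝒫₀` of initial prices. -/
def P0set (G : ℝ) (f f' : ℝ → ℝ) (s : ℝ → ℝ → ℝ) (k0 : ℝ) (d : ℕ → ℝ) : Set ℝ :=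
  {p0 : ℝ | ∃ k p : ℕ → ℝ, IsEquilibrium G f f' s k0 d k p ∧ p 0 = p0}

def wage (f f' : ℝ → ℝ) (x : ℝ) : ℝ := f x - x * f' x

namespace ProdAssump

variable {G : ℝ} {f f' f'' : ℝ → ℝ}

lemma growth_pos (hf : ProdAssump G f f' f'') : 0 < G := hf.1

lemma deriv_pos (hf : ProdAssump G f f' f'') {x : ℝ} (hx : 0 < x) : 0 < f' x :=
  hf.2.2.2.2.2.1 x hx

lemma continuousAt_deriv (hf : ProdAssump G f f' f'') {x : ℝ} (hx : 0 < x) :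
    ContinuousAt f' x :=
  (hf.2.2.2.1 x hx).continuousAt

lemma continuousAt_wage (hf : ProdAssump G f f' f'') {x : ℝ} (hx : 0 < x) :
    ContinuousAt (wage f f') x :=
  (hf.2.2.1 x hx).continuousAt.sub (continuousAt_id.mul (hf.continuousAt_deriv hx))

lemma strictAntiOn_deriv (hf : ProdAssump G f f' f'') : StrictAntiOn f' (Ioi 0) := by
  refine strictAntiOn_of_deriv_neg (convex_Ioi 0)
    (fun x hx => (hf.continuousAt_deriv hx).continuousWithinAt) fun x hx => ?_
  rw [interior_Ioi] at hx
  rw [(hf.2.2.2.1 x hx).deriv]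
  exact hf.2.2.2.2.2.2.1 x hx

lemma strictConcaveOn (hf : ProdAssump G f f' f'') : StrictConcaveOn ℝ (Ioi 0) f :=
  StrictAntiOn.strictConcaveOn_of_deriv (convex_Ioi 0)
    (fun x hx => (hf.2.2.1 x hx).continuousAt.continuousWithinAt) <| by
      rw [interior_Ioi]
      exact hf.strictAntiOn_deriv.congr fun x hx => (hf.2.2.1 x hx).deriv.symm

lemma le_tangent (hf : ProdAssump G f f' f'') {x y : ℝ} (hx : 0 < x) (hy : 0 < y) :
    f y ≤ f x + f' x * (y - x) := by
  rcases lt_trichotomy x y with hxy | rfl | hxy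
  · have := hf.strictConcaveOn.concaveOn.slope_le_of_hasDerivAt hx hy hxy (hf.2.2.1 x hx)
    rw [slope_def_field, div_le_iff₀ (sub_pos.2 hxy)] at this
    linarith
  · simp
  · have := hf.strictConcaveOn.concaveOn.le_slope_of_hasDerivAt hy hx hxy (hf.2.2.1 x hx)
    rw [slope_def_field, le_div_iff₀ (sub_pos.2 hxy)] at this
    linarith

lemma strictMonoOn_wage (hf : ProdAssump G f f' f'') : StrictMonoOn (wage f f') (Ioi 0) := by
  have hderiv : ∀ x ∈ Ioi (0 : ℝ), HasDerivAt (wage f f') (-(x * f'' x)) x := fun x hx =>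
    ((hf.2.2.1 x hx).sub ((hasDerivAt_id' x).mul (hf.2.2.2.1 x hx))).congr_deriv (by ring)
  refine strictMonoOn_of_deriv_pos (convex_Ioi 0)
    (fun x hx => (hf.continuousAt_wage hx).continuousWithinAt) fun x hx => ?_
  rw [interior_Ioi] at hx
  rw [(hderiv x hx).deriv, neg_pos]
  exact mul_neg_of_pos_of_neg hx (hf.2.2.2.2.2.2.1 x hx)

/-- The tangent line at `x` lies above the positive function `f`, so its intercept `wage x`
cannot be negative. -/
lemma wage_nonneg (hf : ProdAssump G f f' f'') {x : ℝ} (hx : 0 < x) : 0 ≤ wage f f' x := by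
  have hlim : Tendsto (fun y => wage f f' x + f' x * y) (𝓝[>] 0) (𝓝 (wage f f' x)) :=
    ((continuous_const.add (continuous_const.mul continuous_id)).tendsto' 0 _
      (by simp)).mono_left nhdsWithin_le_nhds
  refine ge_of_tendsto hlim (eventually_nhdsWithin_of_forall fun y (hy : 0 < y) => ?_)
  have := hf.le_tangent hx hy
  have := hf.2.1 y hy
  simp only [wage]
  linarith

lemma wage_pos (hf : ProdAssump G f f' f'') {x : ℝ} (hx : 0 < x) : 0 < wage f f' x :=
  (hf.wage_nonneg (half_pos hx)).trans_lt
    (hf.strictMonoOn_wage (half_pos hx) hx (half_lt_self hx))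

lemma exists_le_of_deriv_le (hf : ProdAssump G f f' f'') (B : ℝ) :
    ∃ a > 0, ∀ x > 0, f' x ≤ B → a ≤ x := by
  obtain ⟨a, ha, hB⟩ := mem_nhdsGT_iff_exists_Ioo_subset.1
    (hf.2.2.2.2.2.2.2.1.eventually (eventually_gt_atTop B))
  refine ⟨a, ha, fun x hx hxB => ?_⟩
  by_contra! hxa
  exact (hB ⟨hx, hxa⟩ : B < f' x).not_ge hxB

lemma exists_deriv_lt (hf : ProdAssump G f f' f'') : ∃ y > 0, f' y < G := by
  obtain ⟨L, hLG, hL⟩ := hf.2.2.2.2.2.2.2.2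
  obtain ⟨y, hy⟩ := eventually_atTop.1 ((hL.eventually (gt_mem_nhds hLG)).and
    (eventually_gt_atTop 0))
  exact ⟨y, (hy y le_rfl).2, (hy y le_rfl).1⟩

end ProdAssump

theorem IsCompact.exists_mem_eq_le_of_tendsto {X Y : Type*} [TopologicalSpace X]
    [FirstCountableTopology X] [TopologicalSpace Y] [T2Space Y] {K : Set X} (hK : IsCompact K)
    {z : ℕ → X} (hzK : ∀ n, z n ∈ K) {h : X → Y} (hh : ContinuousOn h K) {y : Y}
    (hy : Tendsto (h ∘ z) atTop (𝓝 y)) {Φ : X → ℝ} (hΦ : ContinuousOn Φ K) {ε : ℝ}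
    (hε : ∀ n, ε ≤ Φ (z n)) : ∃ x ∈ K, h x = y ∧ ε ≤ Φ x := by
  obtain ⟨x, hxK, φ, hφ, hzx⟩ := hK.tendsto_subseq hzK
  have hzx' : Tendsto (z ∘ φ) atTop (𝓝[K] x) :=
    tendsto_nhdsWithin_iff.2 ⟨hzx, Eventually.of_forall fun n => hzK _⟩
  refine ⟨x, hxK, tendsto_nhds_unique ((hh x hxK).tendsto.comp hzx') ?_,
    ge_of_tendsto ((hΦ x hxK).tendsto.comp hzx') (Eventually.of_forall fun n => hε _)⟩
  exact hy.comp hφ.tendsto_atTop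

theorem tendsto_one_of_one_le_of_prod_le {a : ℕ → ℝ} (ha : ∀ i, 1 ≤ a i) {C : ℝ}
    (hC : ∀ᶠ t in atTop, ∏ i ∈ Finset.range t, a i ≤ C) : Tendsto a atTop (𝓝 1) := by
  set P := fun t => ∏ i ∈ Finset.range t, a i
  have hP_pos : ∀ t, 0 < P t := fun t => Finset.prod_pos fun i _ => one_pos.trans_le (ha i)
  have hP_succ : ∀ t, P (t + 1) = P t * a t := fun t => Finset.prod_range_succ _ _
  have hP_mono : Monotone P := monotone_nat_of_le_succ fun t => by
    rw [hP_succ]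
    exact le_mul_of_one_le_right (hP_pos t).le (ha t)
  obtain ⟨N, hN⟩ := eventually_atTop.1 hC
  have hbdd : BddAbove (range P) :=
    ⟨C, by rintro _ ⟨t, rfl⟩; exact (hP_mono (le_max_left t N)).trans (hN _ (le_max_right t N))⟩
  have hlim := tendsto_atTop_ciSup hP_mono hbdd
  have hL : 0 < ⨆ t, P t := (hP_pos 0).trans_le (le_ciSup hbdd 0)
  have hratio := (hlim.comp (tendsto_add_atTop_nat 1)).div hlim hL.ne'
  rw [div_self hL.ne'] at hratio
  refine hratio.congr fun t => ?_
  show P (t + 1) / P t = a t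
  rw [hP_succ, mul_div_cancel_left₀ _ (hP_pos t).ne']

def assetDemand (G : ℝ) (f f' : ℝ → ℝ) (s : ℝ → ℝ → ℝ) (x y : ℝ) : ℝ :=
  s (wage f f' x) (f' y) - G * y

section AssetDemand

variable {G : ℝ} {f f' f'' : ℝ → ℝ} {s : ℝ → ℝ → ℝ}

lemma assetDemand_lt (hf : ProdAssump G f f' f'') (hs : SavAssump s) {x x' y y' : ℝ}
    (hx : 0 < x) (hxx' : x ≤ x') (hy : 0 < y) (hyy' : y < y') :
    assetDemand G f f' s x y' < assetDemand G f f' s x' y := by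
  have hx' := hx.trans_le hxx'
  have hy' := hy.trans hyy'
  have hw : s (wage f f' x) (f' y') ≤ s (wage f f' x') (f' y') :=
    (hs.2.2.1 _ (hf.deriv_pos hy')).monotoneOn (hf.wage_pos hx) (hf.wage_pos hx')
      (hf.strictMonoOn_wage.monotoneOn hx hx' hxx')
  have hR : s (wage f f' x') (f' y') ≤ s (wage f f' x') (f' y) :=
    hs.2.2.2 _ (hf.wage_pos hx') (hf.deriv_pos hy') (hf.deriv_pos hy)
      (hf.strictAntiOn_deriv hy hy' hyy').le
  have := mul_lt_mul_of_pos_left hyy' hf.growth_pos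
  simp only [assetDemand]
  linarith

lemma continuousOn_assetDemand (hf : ProdAssump G f f' f'') (hs : SavAssump s) :
    ContinuousOn (fun z : ℝ × ℝ => assetDemand G f f' s z.1 z.2) (Ioi 0 ×ˢ Ioi 0) := by
  refine ContinuousOn.sub ?_ (by fun_prop)
  show ContinuousOn
    ((fun wR : ℝ × ℝ => s wR.1 wR.2) ∘ fun z : ℝ × ℝ => (wage f f' z.1, f' z.2)) _
  refine hs.1.comp (fun z hz => ?_) fun z hz => ⟨hf.wage_pos hz.1, hf.deriv_pos hz.2⟩
  exact (((hf.continuousAt_wage hz.1).comp continuousAt_fst).prodMk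
    ((hf.continuousAt_deriv hz.2).comp continuousAt_snd)).continuousWithinAt

end AssetDemand

def cumReturn (G : ℝ) (f' : ℝ → ℝ) (k : ℕ → ℝ) (t : ℕ) : ℝ :=
  ∏ i ∈ Finset.range t, f' (k (i + 1)) / G

@[simp]
lemma cumReturn_zero (G : ℝ) (f' : ℝ → ℝ) (k : ℕ → ℝ) : cumReturn G f' k 0 = 1 :=
  Finset.prod_range_zero _

lemma qseq_mul_pow (G : ℝ) (f' : ℝ → ℝ) (k : ℕ → ℝ) (t : ℕ) :
    qseq f' k t * G ^ t = (cumReturn G f' k t)⁻¹ := by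
  rw [qseq, cumReturn, Finset.prod_div_distrib, Finset.prod_const, Finset.card_range, inv_div,
    inv_mul_eq_div]

namespace IsEquilibrium

variable {G : ℝ} {f f' f'' : ℝ → ℝ} {s : ℝ → ℝ → ℝ} {k0 : ℝ} {d k p k' p' : ℕ → ℝ}

lemma price_eq_assetDemand (heq : IsEquilibrium G f f' s k0 d k p) (t : ℕ) :
    p t = assetDemand G f f' s (k t) (k (t + 1)) := by
  have := heq.2.2.2.1 t
  simp only [assetDemand, wage]
  linarith

lemma add_lt_wage (hf : ProdAssump G f f' f'') (hs : SavAssump s)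
    (heq : IsEquilibrium G f f' s k0 d k p) (t : ℕ) :
    G * k (t + 1) + p t < wage f f' (k t) := by
  rw [heq.2.2.2.1 t]
  exact (hs.2.1 _ (hf.wage_pos (heq.1 t)) _ (hf.deriv_pos (heq.1 (t + 1)))).2

lemma price_lt_wage (hf : ProdAssump G f f' f'') (hs : SavAssump s)
    (heq : IsEquilibrium G f f' s k0 d k p) (t : ℕ) : p t < wage f f' (k t) := by
  have := mul_pos hf.growth_pos (heq.1 (t + 1))
  linarith [heq.add_lt_wage hf hs t]

/-- The tangent at a point where `f' < G` bounds output by an affine function of slope below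
`G`, which keeps capital bounded. -/
lemma exists_capital_le (hf : ProdAssump G f f' f'') (hs : SavAssump s)
    (heq : IsEquilibrium G f f' s k0 d k p) : ∃ M, ∀ t, k t ≤ M := by
  obtain ⟨y, hy, hyG⟩ := hf.exists_deriv_lt
  refine ⟨max (k 0) (wage f f' y / (G - f' y)), fun t => ?_⟩
  induction t with
  | zero => exact le_max_left _ _
  | succ t ih =>
    set M := max (k 0) (wage f f' y / (G - f' y))
    have hwage : wage f f' (k t) ≤ wage f f' y + f' y * k t := by
      have := hf.le_tangent hy (heq.1 t)
      have := mul_pos (heq.1 t) (hf.deriv_pos (heq.1 t))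
      simp only [wage] at *
      linarith
    have hM : wage f f' y ≤ (G - f' y) * M := by
      rw [← div_le_iff₀' (sub_pos.2 hyG)]
      exact le_max_right _ _
    have hGk : G * k (t + 1) < G * M := by
      have := mul_le_mul_of_nonneg_left ih (hf.deriv_pos hy).le
      linarith [heq.add_lt_wage hf hs t, heq.2.1 t]
    exact (lt_of_mul_lt_mul_left hGk hf.growth_pos.le).le

lemma eq_of_price_zero_eq (hf : ProdAssump G f f' f'') (hs : SavAssump s)
    (heq : IsEquilibrium G f f' s k0 d k p) (heq' : IsEquilibrium G f f' s k0 d k' p')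
    (h0 : p 0 = p' 0) (t : ℕ) : k t = k' t ∧ p t = p' t := by
  induction t with
  | zero => exact ⟨heq.2.2.1.trans heq'.2.2.1.symm, h0⟩
  | succ t ih =>
    have e : assetDemand G f f' s (k t) (k (t + 1))
        = assetDemand G f f' s (k t) (k' (t + 1)) := by
      rw [← heq.price_eq_assetDemand, ih.1, ← heq'.price_eq_assetDemand, ih.2]
    have hk : k (t + 1) = k' (t + 1) := by
      rcases lt_trichotomy (k (t + 1)) (k' (t + 1)) with h | h | h
      · exact absurd e (assetDemand_lt hf hs (heq.1 t) le_rfl (heq.1 _) h).ne'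
      · exact h
      · exact absurd e (assetDemand_lt hf hs (heq.1 t) le_rfl (heq'.1 _) h).ne
    exact ⟨hk, by rw [heq.2.2.2.2, heq'.2.2.2.2, ih.2, hk]⟩

lemma qseq_pos (hf : ProdAssump G f f' f'') (heq : IsEquilibrium G f f' s k0 d k p) (t : ℕ) :
    0 < qseq f' k t :=
  inv_pos.2 (Finset.prod_pos fun i _ => hf.deriv_pos (heq.1 (i + 1)))

lemma cumReturn_pos (hf : ProdAssump G f f' f'') (heq : IsEquilibrium G f f' s k0 d k p)
    (t : ℕ) : 0 < cumReturn G f' k t :=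
  Finset.prod_pos fun i _ => div_pos (hf.deriv_pos (heq.1 (i + 1))) hf.growth_pos

lemma discounted_price_add_sum (hf : ProdAssump G f f' f'')
    (heq : IsEquilibrium G f f' s k0 d k p) (t : ℕ) :
    qseq f' k t * G ^ t * p t + ∑ n ∈ Finset.range t, qseq f' k (n + 1) * Dseq G d (n + 1)
      = p 0 := by
  induction t with
  | zero => simp [qseq]
  | succ t ih =>
    have hR := (hf.deriv_pos (heq.1 (t + 1))).ne'
    have hq : qseq f' k t = qseq f' k (t + 1) * f' (k (t + 1)) := by
      rw [qseq, qseq, Finset.prod_range_succ, mul_inv, mul_assoc, inv_mul_cancel₀ hR, mul_one]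
    rw [Finset.sum_range_succ, ← ih, heq.2.2.2.2 t, hq, Dseq]
    field_simp [hf.growth_pos.ne']
    ring

lemma qseq_mul_Dseq_nonneg (hf : ProdAssump G f f' f'') (hd : ∀ t ≥ 1, 0 ≤ d t)
    (heq : IsEquilibrium G f f' s k0 d k p) (n : ℕ) :
    0 ≤ qseq f' k (n + 1) * Dseq G d (n + 1) :=
  mul_nonneg (heq.qseq_pos hf _).le (mul_nonneg (pow_nonneg hf.growth_pos.le _) (hd _ le_add_self))

lemma sum_qseq_mul_Dseq_le (hf : ProdAssump G f f' f'') (heq : IsEquilibrium G f f' s k0 d k p)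
    (t : ℕ) : ∑ n ∈ Finset.range t, qseq f' k (n + 1) * Dseq G d (n + 1) ≤ p 0 := by
  have := mul_nonneg (mul_pos (heq.qseq_pos hf t) (pow_pos hf.growth_pos t)).le (heq.2.1 t)
  linarith [heq.discounted_price_add_sum hf t]

lemma summable_qseq_mul_Dseq (hf : ProdAssump G f f' f'') (hd : ∀ t ≥ 1, 0 ≤ d t)
    (heq : IsEquilibrium G f f' s k0 d k p) :
    Summable fun n => qseq f' k (n + 1) * Dseq G d (n + 1) :=
  summable_of_sum_range_le (heq.qseq_mul_Dseq_nonneg hf hd) (heq.sum_qseq_mul_Dseq_le hf)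

lemma bubble_mul_qseq_mul_pow (hf : ProdAssump G f f' f'') (hd : ∀ t ≥ 1, 0 ≤ d t)
    (heq : IsEquilibrium G f f' s k0 d k p) (t : ℕ) :
    bubble G f' k p d t * (qseq f' k t * G ^ t)
      = p 0 - ∑' n, qseq f' k (n + 1) * Dseq G d (n + 1) := by
  set T := ∑' n, qseq f' k (t + 1 + n) * Dseq G d (t + 1 + n)
  have htail : T = ∑' n, qseq f' k (n + 1) * Dseq G d (n + 1)
      - ∑ n ∈ Finset.range t, qseq f' k (n + 1) * Dseq G d (n + 1) := by
    rw [← (heq.summable_qseq_mul_Dseq hf hd).sum_add_tsum_nat_add t, add_sub_cancel_left]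
    exact tsum_congr fun n => by rw [show t + 1 + n = n + t + 1 by omega]
  have hq := (heq.qseq_pos hf t).ne'
  have hG := (pow_pos hf.growth_pos t).ne'
  calc bubble G f' k p d t * (qseq f' k t * G ^ t)
      = qseq f' k t * G ^ t * p t - T := by
        simp only [bubble, fundval, T]
        field_simp
    _ = _ := by
        rw [htail, ← heq.discounted_price_add_sum hf t]
        ring

lemma bubble_eq_mul_cumReturn (hf : ProdAssump G f f' f'') (hd : ∀ t ≥ 1, 0 ≤ d t)
    (heq : IsEquilibrium G f f' s k0 d k p) (t : ℕ) :
    bubble G f' k p d t = bubble G f' k p d 0 * cumReturn G f' k t := by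
  have h := heq.bubble_mul_qseq_mul_pow hf hd t
  rw [← heq.bubble_mul_qseq_mul_pow hf hd 0, qseq_mul_pow, qseq_mul_pow, cumReturn_zero,
    inv_one, mul_one] at h
  rw [← h, inv_mul_cancel_right₀ (heq.cumReturn_pos hf t).ne']

lemma bubble_zero_nonneg (hf : ProdAssump G f f' f'') (hd : ∀ t ≥ 1, 0 ≤ d t)
    (heq : IsEquilibrium G f f' s k0 d k p) : 0 ≤ bubble G f' k p d 0 := by
  have h := heq.bubble_mul_qseq_mul_pow hf hd 0
  rw [qseq_mul_pow, cumReturn_zero, inv_one, mul_one] at h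
  rw [h, sub_nonneg]
  exact Real.tsum_le_of_sum_range_le (heq.qseq_mul_Dseq_nonneg hf hd)
    (heq.sum_qseq_mul_Dseq_le hf)

lemma exists_pos_eventually_le_cumReturn (hf : ProdAssump G f f' f'') (hd : ∀ t ≥ 1, 0 ≤ d t)
    (heq : IsEquilibrium G f f' s k0 d k p) (hab : AsympBubbly G f' k p d) :
    ∃ c > 0, ∀ᶠ t in atTop, c ≤ cumReturn G f' k t := by
  have hb := heq.bubble_eq_mul_cumReturn hf hd
  have hb0 := heq.bubble_zero_nonneg hf hd
  have hbdd : IsBoundedUnder (· ≥ ·) atTop (bubble G f' k p d) :=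
    ⟨0, eventually_map.2 <| Eventually.of_forall fun t => by
      rw [hb]; exact mul_nonneg hb0 (heq.cumReturn_pos hf t).le⟩
  obtain ⟨N, hN⟩ := eventually_atTop.1 (eventually_lt_of_lt_liminf (half_lt_self hab) hbdd)
  have hb0' : 0 < bubble G f' k p d 0 := by
    refine hb0.lt_of_ne fun h => ?_
    have := hN N le_rfl
    rw [hb, ← h, zero_mul] at this
    exact (half_pos hab).not_gt this
  refine ⟨_, div_pos (half_pos hab) hb0', eventually_atTop.2 ⟨N, fun t ht => ?_⟩⟩
  rw [div_le_iff₀' hb0', ← hb]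
  exact (hN t ht).le

lemma gap_succ_ge (hf : ProdAssump G f f' f'') (heq : IsEquilibrium G f f' s k0 d k p)
    (heq' : IsEquilibrium G f f' s k0 d k' p') {t : ℕ}
    (hR : f' (k (t + 1)) ≤ f' (k' (t + 1))) :
    f' (k' (t + 1)) / G * (p' t - p t) ≤ p' (t + 1) - p (t + 1) := by
  rw [heq.2.2.2.2, heq'.2.2.2.2]
  have := mul_le_mul_of_nonneg_right (div_le_div_of_nonneg_right hR hf.growth_pos.le) (heq.2.1 t)
  linarith

lemma capital_le_and_price_lt (hf : ProdAssump G f f' f'') (hs : SavAssump s)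
    (heq : IsEquilibrium G f f' s k0 d k p) (heq' : IsEquilibrium G f f' s k0 d k' p')
    (h0 : p 0 < p' 0) (t : ℕ) : k' t ≤ k t ∧ p t < p' t := by
  induction t with
  | zero => exact ⟨(heq'.2.2.1.trans heq.2.2.1.symm).le, h0⟩
  | succ t ih =>
    have hk : k' (t + 1) ≤ k (t + 1) := by
      by_contra! h
      have := assetDemand_lt hf hs (heq'.1 t) ih.1 (heq.1 _) h
      rw [← heq.price_eq_assetDemand, ← heq'.price_eq_assetDemand] at this
      linarith [ih.2]
    have hgap := heq.gap_succ_ge hf heq'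
      (hf.strictAntiOn_deriv.antitoneOn (heq'.1 _) (heq.1 _) hk)
    have := mul_pos (div_pos (hf.deriv_pos (heq'.1 (t + 1))) hf.growth_pos) (sub_pos.2 ih.2)
    exact ⟨hk, by linarith⟩

lemma deriv_le_of_price_lt (hf : ProdAssump G f f' f'') (hs : SavAssump s)
    (heq : IsEquilibrium G f f' s k0 d k p) (heq' : IsEquilibrium G f f' s k0 d k' p')
    (h0 : p 0 < p' 0) (t : ℕ) : f' (k t) ≤ f' (k' t) :=
  hf.strictAntiOn_deriv.antitoneOn (heq'.1 t) (heq.1 t)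
    (heq.capital_le_and_price_lt hf hs heq' h0 t).1

lemma cumReturn_le_of_price_lt (hf : ProdAssump G f f' f'') (hs : SavAssump s)
    (heq : IsEquilibrium G f f' s k0 d k p) (heq' : IsEquilibrium G f f' s k0 d k' p')
    (h0 : p 0 < p' 0) (t : ℕ) : cumReturn G f' k t ≤ cumReturn G f' k' t :=
  Finset.prod_le_prod (fun _ _ => (div_pos (hf.deriv_pos (heq.1 _)) hf.growth_pos).le) fun _ _ =>
    div_le_div_of_nonneg_right (heq.deriv_le_of_price_lt hf hs heq' h0 _) hf.growth_pos.le

lemma cumReturn_mul_le_gap (hf : ProdAssump G f f' f'') (hs : SavAssump s)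
    (heq : IsEquilibrium G f f' s k0 d k p) (heq' : IsEquilibrium G f f' s k0 d k' p')
    (h0 : p 0 < p' 0) (t : ℕ) : cumReturn G f' k' t * (p' 0 - p 0) ≤ p' t - p t := by
  induction t with
  | zero => simp
  | succ t ih =>
    rw [cumReturn, Finset.prod_range_succ, ← cumReturn, mul_right_comm]
    refine le_trans ?_ (heq.gap_succ_ge hf heq' (heq.deriv_le_of_price_lt hf hs heq' h0 _))
    rw [mul_comm]
    exact mul_le_mul_of_nonneg_left ih (div_pos (hf.deriv_pos (heq'.1 _)) hf.growth_pos).le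

lemma deriv_succ_le_of_gap (hf : ProdAssump G f f' f'') (hs : SavAssump s)
    (heq : IsEquilibrium G f f' s k0 d k p) (heq' : IsEquilibrium G f f' s k0 d k' p')
    (h0 : p 0 < p' 0) {t : ℕ} {ε W : ℝ} (hε : 0 < ε) (ht : ε ≤ p' t - p t)
    (hW : p' (t + 1) - p (t + 1) ≤ W) : f' (k' (t + 1)) ≤ G * W / ε := by
  have hRG := div_pos (hf.deriv_pos (heq'.1 (t + 1))) hf.growth_pos
  have := ((mul_le_mul_of_nonneg_left ht hRG.le).trans
    (heq.gap_succ_ge hf heq' (heq.deriv_le_of_price_lt hf hs heq' h0 _))).trans hW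
  rw [le_div_iff₀ hε]
  calc f' (k' (t + 1)) * ε = G * (f' (k' (t + 1)) / G * ε) := by field_simp [hf.growth_pos.ne']
    _ ≤ G * W := mul_le_mul_of_nonneg_left this hf.growth_pos.le

lemma tendsto_deriv_div_of_price_lt (hf : ProdAssump G f f' f'') (hs : SavAssump s)
    (heq : IsEquilibrium G f f' s k0 d k p) (heq' : IsEquilibrium G f f' s k0 d k' p')
    (h0 : p 0 < p' 0) {C : ℝ}
    (hC : ∀ᶠ t in atTop, cumReturn G f' k' t / cumReturn G f' k t ≤ C) :
    Tendsto (fun t => f' (k' t) / f' (k t)) atTop (𝓝 1) := by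
  have hprod : ∀ t, ∏ i ∈ Finset.range t, f' (k' (i + 1)) / f' (k (i + 1))
      = cumReturn G f' k' t / cumReturn G f' k t := fun t => by
    rw [cumReturn, cumReturn, ← Finset.prod_div_distrib]
    exact Finset.prod_congr rfl fun i _ => (div_div_div_cancel_right₀ hf.growth_pos.ne' _ _).symm
  refine (tendsto_add_atTop_iff_nat 1).1 (tendsto_one_of_one_le_of_prod_le (fun i => ?_)
    (hC.mono fun t ht => (hprod t).trans_le ht))
  exact (one_le_div (hf.deriv_pos (heq.1 _))).2 (heq.deriv_le_of_price_lt hf hs heq' h0 _)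

lemma frequently_gap_lt (hf : ProdAssump G f f' f'') (hs : SavAssump s)
    (heq : IsEquilibrium G f f' s k0 d k p) (heq' : IsEquilibrium G f f' s k0 d k' p')
    {a M ε : ℝ} (ha : 0 < a) (hε : 0 < ε)
    (hk : ∀ᶠ t in atTop, k t ∈ Icc a M ∧ k' t ∈ Icc a M)
    (hratio : Tendsto (fun t => f' (k' t) / f' (k t)) atTop (𝓝 1)) :
    ∃ᶠ t in atTop, p' t - p t < ε := by
  by_contra! hgap
  obtain ⟨N, hN⟩ := eventually_atTop.1 (hgap.and hk)
  set I := Icc a M ×ˢ Icc a M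
  have hIpos : I ⊆ Ioi 0 ×ˢ Ioi 0 :=
    prod_mono (fun x hx => ha.trans_le hx.1) fun x hx => ha.trans_le hx.1
  let z : ℕ → (ℝ × ℝ) × (ℝ × ℝ) := fun n =>
    ((k (n + N), k (n + N + 1)), (k' (n + N), k' (n + N + 1)))
  have hzI : ∀ n, z n ∈ I ×ˢ I := fun n =>
    ⟨⟨(hN _ le_add_self).2.1, (hN _ (by omega)).2.1⟩,
      ⟨(hN _ le_add_self).2.2, (hN _ (by omega)).2.2⟩⟩
  have hf'I : ∀ x ∈ Icc a M, ContinuousAt f' x := fun x hx =>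
    hf.continuousAt_deriv (ha.trans_le hx.1)
  have hf'ne : ∀ x ∈ Icc a M, f' x ≠ 0 := fun x hx => (hf.deriv_pos (ha.trans_le hx.1)).ne'
  have hh : ContinuousOn (fun x : (ℝ × ℝ) × (ℝ × ℝ) =>
      (f' x.2.1 / f' x.1.1, f' x.2.2 / f' x.1.2)) (I ×ˢ I) := by
    rintro ⟨⟨x, y⟩, ⟨x', y'⟩⟩ ⟨⟨hx, hy⟩, ⟨hx', hy'⟩⟩
    refine ContinuousAt.continuousWithinAt (ContinuousAt.prodMk ?_ ?_)
    · exact ContinuousAt.div (f := fun x : (ℝ × ℝ) × (ℝ × ℝ) => f' x.2.1)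
        ((hf'I _ hx').comp (f := fun x : (ℝ × ℝ) × (ℝ × ℝ) => x.2.1) (by fun_prop))
        ((hf'I _ hx).comp (f := fun x : (ℝ × ℝ) × (ℝ × ℝ) => x.1.1) (by fun_prop))
        (hf'ne _ hx)
    · exact ContinuousAt.div (f := fun x : (ℝ × ℝ) × (ℝ × ℝ) => f' x.2.2)
        ((hf'I _ hy').comp (f := fun x : (ℝ × ℝ) × (ℝ × ℝ) => x.2.2) (by fun_prop))
        ((hf'I _ hy).comp (f := fun x : (ℝ × ℝ) × (ℝ × ℝ) => x.1.2) (by fun_prop))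
        (hf'ne _ hy)
  have hΦ : ContinuousOn (fun x : (ℝ × ℝ) × (ℝ × ℝ) =>
      assetDemand G f f' s x.2.1 x.2.2 - assetDemand G f f' s x.1.1 x.1.2) (I ×ˢ I) :=
    ((continuousOn_assetDemand hf hs).comp continuousOn_snd fun x hx => hIpos hx.2).sub
      ((continuousOn_assetDemand hf hs).comp continuousOn_fst fun x hx => hIpos hx.1)
  have hlim : Tendsto (fun n => (f' (k' (n + N)) / f' (k (n + N)),
      f' (k' (n + N + 1)) / f' (k (n + N + 1)))) atTop (𝓝 (1, 1)) :=
    ((tendsto_add_atTop_iff_nat N).2 hratio).prodMk_nhds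
      ((tendsto_add_atTop_iff_nat (N + 1)).2 hratio)
  obtain ⟨x, hx, hx1, hxε⟩ := (isCompact_Icc.prod isCompact_Icc).prod
    (isCompact_Icc.prod isCompact_Icc) |>.exists_mem_eq_le_of_tendsto hzI hh hlim hΦ
    (ε := ε) fun n => by
      simp only [z, ← heq.price_eq_assetDemand, ← heq'.price_eq_assetDemand]
      exact (hN _ le_add_self).1
  simp only [Prod.mk.injEq, div_eq_one_iff_eq (hf'ne _ hx.1.1),
    div_eq_one_iff_eq (hf'ne _ hx.1.2)] at hx1
  have h1 := hf.strictAntiOn_deriv.injOn (hIpos hx.2).1 (hIpos hx.1).1 hx1.1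
  have h2 := hf.strictAntiOn_deriv.injOn (hIpos hx.2).2 (hIpos hx.1).2 hx1.2
  simp only [h1, h2, sub_self] at hxε
  exact hε.not_ge hxε

lemma price_zero_le_of_asympBubbly (hf : ProdAssump G f f' f'') (hs : SavAssump s)
    (hd : ∀ t ≥ 1, 0 ≤ d t) (heq : IsEquilibrium G f f' s k0 d k p)
    (hab : AsympBubbly G f' k p d) (heq' : IsEquilibrium G f f' s k0 d k' p') :
    p' 0 ≤ p 0 := by
  by_contra! h0
  set δ₀ := p' 0 - p 0
  have hδ₀ : 0 < δ₀ := sub_pos.2 h0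
  have hcmp := heq.capital_le_and_price_lt hf hs heq' h0
  have hgap := heq.cumReturn_mul_le_gap hf hs heq' h0
  obtain ⟨c, hc, hcR⟩ := heq.exists_pos_eventually_le_cumReturn hf hd hab
  obtain ⟨M, hM⟩ := heq.exists_capital_le hf hs
  set W := wage f f' M
  have hgapW : ∀ t, p' t - p t < W := fun t => by
    have := hf.strictMonoOn_wage.monotoneOn (heq'.1 t)
      ((heq'.1 t).trans_le ((hcmp t).1.trans (hM t))) ((hcmp t).1.trans (hM t))
    linarith [heq'.price_lt_wage hf hs t, heq.2.1 t]
  have hgapc : ∀ᶠ t in atTop, c * δ₀ ≤ p' t - p t := hcR.mono fun t ht =>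
    (mul_le_mul_of_nonneg_right (ht.trans (heq.cumReturn_le_of_price_lt hf hs heq' h0 t))
      hδ₀.le).trans (hgap t)
  have hratio := heq.tendsto_deriv_div_of_price_lt hf hs heq' h0 (C := W / δ₀ / c) <|
    hcR.mono fun t ht => div_le_div₀ (div_pos (hf.wage_pos ((heq.1 0).trans_le (hM 0))) hδ₀).le
      ((le_div_iff₀ hδ₀).2 ((hgap t).trans (hgapW t).le)) hc ht
  obtain ⟨a, ha, haR⟩ := hf.exists_le_of_deriv_le (G * W / (c * δ₀))
  have hlow : ∀ᶠ t in atTop, a ≤ k' t := by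
    rw [← map_add_atTop_eq_nat 1]
    exact eventually_map.2 (hgapc.mono fun t ht => haR _ (heq'.1 _)
      (heq.deriv_succ_le_of_gap hf hs heq' h0 (mul_pos hc hδ₀) ht (hgapW (t + 1)).le))
  obtain ⟨t, hlt, hge⟩ := (heq.frequently_gap_lt hf hs heq' ha (mul_pos hc hδ₀)
    (hlow.mono fun t ht => ⟨⟨ht.trans (hcmp t).1, hM t⟩, ⟨ht, (hcmp t).1.trans (hM t)⟩⟩)
    hratio |>.and_eventually hgapc).exists
  exact hlt.not_ge hge

end IsEquilibrium

theorem stmt12_general (G : ℝ) (f f' f'' : ℝ → ℝ) (s : ℝ → ℝ → ℝ)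
    (hf : ProdAssump G f f' f'') (hs : SavAssump s)
    (k0 : ℝ) (d : ℕ → ℝ) (hd : ∀ t ≥ 1, 0 ≤ d t)
    (k p : ℕ → ℝ)
    (heq : IsEquilibrium G f f' s k0 d k p)
    (hab : AsympBubbly G f' k p d) :
    (∀ k' p' : ℕ → ℝ, IsEquilibrium G f f' s k0 d k' p' →
      AsympBubbly G f' k' p' d → (∀ t, k t = k' t) ∧ (∀ t, p t = p' t)) ∧
    (∀ k' p' : ℕ → ℝ, IsEquilibrium G f f' s k0 d k' p' → p' 0 ≤ p 0) := by
  refine ⟨fun k' p' heq' hab' => ?_, fun k' p' heq' =>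
    heq.price_zero_le_of_asympBubbly hf hs hd hab heq'⟩
  have h0 : p 0 = p' 0 := le_antisymm (heq'.price_zero_le_of_asympBubbly hf hs hd hab' heq)
    (heq.price_zero_le_of_asympBubbly hf hs hd hab heq')
  exact ⟨fun t => (heq.eq_of_price_zero_eq hf hs heq' h0 t).1,
    fun t => (heq.eq_of_price_zero_eq hf hs heq' h0 t).2⟩

/-- Corollary `cor:unique_bubble`: if `G_d < G`, there is at most
one asymptotically bubbly equilibrium, and it has the largest initial price among
all equilibria. -/
theorem stmt12 (G : ℝ) (f f' f'' : ℝ → ℝ) (s : ℝ → ℝ → ℝ)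
    (hf : ProdAssump G f f' f'') (hs : SavAssump s)
    (k0 : ℝ) (hk0 : 0 < k0) (d : ℕ → ℝ) (hd : ∀ t ≥ 1, 0 ≤ d t)
    (hGd : GdGrowth G d < (G : EReal))
    (k p : ℕ → ℝ)
    (heq : IsEquilibrium G f f' s k0 d k p)
    (hab : AsympBubbly G f' k p d) :
    (∀ k' p' : ℕ → ℝ, IsEquilibrium G f f' s k0 d k' p' →
      AsympBubbly G f' k' p' d → (∀ t, k t = k' t) ∧ (∀ t, p t = p' t)) ∧
    (∀ k' p' : ℕ → ℝ, IsEquilibrium G f f' s k0 d k' p' → p' 0 ≤ p 0) :=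
  stmt12_general G f f' f'' s hf hs k0 d hd k p heq hab

end
end

section
/- (1) For any sequences (k_t)_{t≥0} with k_t > 0, (p_t)_{t≥0} with p_t > 0, and (d_t)_{t≥1} with d_t ≥ 0 satisfying k_{t+1} = (βA(1−α)·k_t^α − p_t)/G for all t ≥ 0 and p_t = (Aα·k_t^{α−1}/G)·p_{t−1} − d_t for all t ≥ 1, the sequence x_t := Aα·k_t^α/(G·k_{t+1}) satisfies x_t > ρ and x_t + ρ/x_{t+1} ≥ 1 + ρ for all t. (2) Conversely, for any k_0 > 0 and any sequence (x_t)_{t≥0} with x_t > ρ and x_t + ρ/x_{t+1} ≥ 1 + ρ for all t, define k_{t+1} = Aα·k_t^α/(G·x_t), p_t = (Aα/ρ)·k_t^α − G·k_{t+1}, and d_{t+1} = (Aα/G)·k_{t+1}^{α−1}·p_t − p_{t+1}; then k_t > 0, p_t > 0, d_t ≥ 0, the two difference equations above hold, and moreover k_{t+1} = (Aα/G)^{(1−α^{t+1})/(1−α)}·k_0^{α^{t+1}}/(x_t·x_{t−1}^α⋯x_0^{α^t}), d_{t+1} = (Aα/ρ)·k_{t+1}^α·(x_t + ρ/x_{t+1}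 − 1 − ρ), and d_t/p_t = (x_{t−1} + ρ/x_t − 1 − ρ)/(1 − ρ/x_t). -/
/-!
Write `c = Aα/ρ = βA(1-α)`. The relation `G k_{t+1} x_t = Aα k_t^α` linking `k` and `x` turns the
savings equation into `p_t = c k_t^α (1 - ρ/x_t)`, and then the price recursion into
`d_{t+1} = c k_{t+1}^α (x_t + ρ/x_{t+1} - 1 - ρ)`. As `c k^α > 0`, positivity of `p_t` is exactly
`x_t > ρ` and nonnegativity of `d_{t+1}` is exactly the second inequality, in both directions. The
closed form for `k` comes from iterating the log-linear recursion `k_{t+1} = (Aα/G) k_t^α / x_t`.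
-/

open Finset Real

section RpowRecurrence

variable {C α : ℝ} {k x : ℕ → ℝ}

theorem rpow_recurrence_pos (hC : 0 < C) (hk0 : 0 < k 0) (hx : ∀ t, 0 < x t)
    (hk : ∀ t, k (t + 1) = C * k t ^ α / x t) : ∀ t, 0 < k t
  | 0 => hk0
  | t + 1 => by
    have := rpow_recurrence_pos hC hk0 hx hk t
    have := hx t
    rw [hk]
    positivity

theorem rpow_recurrence_eq (hC : 0 < C) (hk0 : 0 < k 0) (hx : ∀ t, 0 < x t)
    (hk : ∀ t, k (t + 1) = C * k t ^ α / x t) (t : ℕ) :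
    k (t + 1) = C ^ (∑ i ∈ range (t + 1), α ^ i) * k 0 ^ (α ^ (t + 1)) /
      ∏ i ∈ range (t + 1), x (t - i) ^ (α ^ i) := by
  induction t with
  | zero => simp [hk 0]
  | succ t ih =>
    have hxt : ∀ i ∈ range (t + 1), 0 ≤ x (t - i) ^ α ^ i :=
      fun i _ => rpow_nonneg (hx _).le _
    rw [hk (t + 1), ih, div_rpow (by positivity) (prod_nonneg hxt),
      mul_rpow (by positivity) (by positivity), ← rpow_mul hC.le, ← rpow_mul hk0.le,
      ← finsetProd_rpow _ _ hxt, sum_range_succ' (fun i => α ^ i) (t + 1),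
      prod_range_succ' (fun i => x (t + 1 - i) ^ α ^ i) (t + 1), rpow_add hC, sum_mul]
    simp only [← rpow_mul (hx _).le, ← pow_succ, Nat.add_sub_add_right, pow_zero, rpow_one,
      Nat.sub_zero]
    field_simp

end RpowRecurrence

section Equilibrium

variable {a G α ρ : ℝ} {k p d x : ℕ → ℝ}

theorem price_eq (hρ : ρ ≠ 0) (hx : ∀ t, x t ≠ 0)
    (hGkx : ∀ t, G * k (t + 1) * x t = a * k t ^ α)
    (hsav : ∀ t, G * k (t + 1) = a / ρ * k t ^ α - p t) (t : ℕ) :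
    p t = a / ρ * k t ^ α * (1 - ρ / x t) := by
  have hGk : G * k (t + 1) = a * k t ^ α / x t := (eq_div_iff (hx t)).mpr (hGkx t)
  calc p t = a / ρ * k t ^ α - G * k (t + 1) := by linarith [hsav t]
    _ = a / ρ * k t ^ α * (1 - ρ / x t) := by rw [hGk]; field_simp

theorem dividend_eq (hG : G ≠ 0) (hk : ∀ t, 0 < k t) (hρ : ρ ≠ 0) (hx : ∀ t, x t ≠ 0)
    (hGkx : ∀ t, G * k (t + 1) * x t = a * k t ^ α)
    (hsav : ∀ t, G * k (t + 1) = a / ρ * k t ^ α - p t)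
    (hd : ∀ t, d (t + 1) = a / G * k (t + 1) ^ (α - 1) * p t - p (t + 1)) (t : ℕ) :
    d (t + 1) = a / ρ * k (t + 1) ^ α * (x t + ρ / x (t + 1) - 1 - ρ) := by
  have h := hGkx t
  rw [hd, rpow_sub_one (hk _).ne', price_eq hρ hx hGkx hsav, price_eq hρ hx hGkx hsav]
  field_simp [(hk (t + 1)).ne', hx t, hx (t + 1)]
  linear_combination -(a * k (t + 1) ^ α * (x t - ρ) * x (t + 1)) * h

theorem x_bounds_of_equilibrium (hG : 0 < G) (ha : 0 < a) (hρ : 0 < ρ) (hk : ∀ t, 0 < k t)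
    (hp : ∀ t, 0 < p t) (hd : ∀ t, 0 ≤ d (t + 1))
    (hkeq : ∀ t, k (t + 1) = (a / ρ * k t ^ α - p t) / G)
    (hpeq : ∀ t, p (t + 1) = a * k (t + 1) ^ (α - 1) / G * p t - d (t + 1))
    (hx : ∀ t, x t = a * k t ^ α / (G * k (t + 1))) (t : ℕ) :
    ρ < x t ∧ 1 + ρ ≤ x t + ρ / x (t + 1) := by
  have hxpos (t : ℕ) : 0 < x t := by
    have := hk t
    have := hk (t + 1)
    rw [hx]
    positivity
  have hxne (t : ℕ) : x t ≠ 0 := (hxpos t).ne'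
  have hGkx (t : ℕ) : G * k (t + 1) * x t = a * k t ^ α := by
    rw [hx]
    field_simp [(hk (t + 1)).ne']
  have hsav (t : ℕ) : G * k (t + 1) = a / ρ * k t ^ α - p t := by
    rw [hkeq]
    field_simp
  have hK (t : ℕ) : 0 < a / ρ * k t ^ α := by
    have := hk t
    positivity
  constructor
  · have h := hp t
    rw [price_eq hρ.ne' hxne hGkx hsav] at h
    have h' := pos_of_mul_pos_right h (hK t).le
    rwa [sub_pos, div_lt_one (hxpos t)] at h'
  · have h := hd t
    rw [dividend_eq (d := d) hG.ne' hk hρ.ne' hxne hGkx hsav (fun t => by rw [hpeq]; ring)] at h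
    linarith [nonneg_of_mul_nonneg_right h (hK _)]

theorem equilibrium_of_x_bounds (hG : 0 < G) (ha : 0 < a) (hρ : 0 < ρ) (hk0 : 0 < k 0)
    (hxρ : ∀ t, ρ < x t) (hx_ineq : ∀ t, 1 + ρ ≤ x t + ρ / x (t + 1))
    (hkrec : ∀ t, k (t + 1) = a / G * k t ^ α / x t)
    (hpdef : ∀ t, p t = a / ρ * k t ^ α - G * k (t + 1))
    (hddef : ∀ t, d (t + 1) = a / G * k (t + 1) ^ (α - 1) * p t - p (t + 1)) :
    (∀ t, 0 < k t) ∧ (∀ t, 0 < p t) ∧ (∀ t, 0 ≤ d (t + 1)) ∧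
      (∀ t, d (t + 1) = a / ρ * k (t + 1) ^ α * (x t + ρ / x (t + 1) - 1 - ρ)) ∧
      (∀ t, d (t + 1) / p (t + 1) = (x t + ρ / x (t + 1) - 1 - ρ) / (1 - ρ / x (t + 1))) := by
  have hxpos (t : ℕ) : 0 < x t := hρ.trans (hxρ t)
  have hxne (t : ℕ) : x t ≠ 0 := (hxpos t).ne'
  have hk := rpow_recurrence_pos (by positivity) hk0 hxpos hkrec
  have hGkx (t : ℕ) : G * k (t + 1) * x t = a * k t ^ α := by
    rw [hkrec]
    field_simp [hxne t]
  have hsav (t : ℕ) : G * k (t + 1) = a / ρ * k t ^ α - p t := by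
    rw [hpdef]
    ring
  have hK (t : ℕ) : 0 < a / ρ * k t ^ α := by
    have := hk t
    positivity
  have hprice := price_eq hρ.ne' hxne hGkx hsav
  have hdiv := dividend_eq hG.ne' hk hρ.ne' hxne hGkx hsav hddef
  refine ⟨hk, fun t => ?_, fun t => ?_, hdiv, fun t => ?_⟩
  · rw [hprice]
    exact mul_pos (hK t) (by rw [sub_pos, div_lt_one (hxpos t)]; exact hxρ t)
  · rw [hdiv]
    exact mul_nonneg (hK _).le (by linarith [hx_ineq t])
  · rw [hdiv, hprice, mul_div_mul_left _ _ (hK _).ne']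

end Equilibrium

/-- Lemma `lem:CD`, closed-form solutions with log utility and
Cobb–Douglas production: (1) in any positive-price equilibrium, the transformed
variable `x_t = Aα k_t^α/(G k_{t+1})` satisfies `x_t > ρ` and
`x_t + ρ/x_{t+1} ≥ 1 + ρ`; (2) conversely, any sequence `(x_t)` satisfying these
inequalities generates an equilibrium via the stated formulas, with closed forms
for `k_{t+1}`, `d_{t+1}`, and `d_t/p_t`. -/
theorem stmt16 (G A α β ρ : ℝ)
    (hG : 0 < G) (hA : 0 < A) (hα : α ∈ Set.Ioo (0:ℝ) 1) (hβ : β ∈ Set.Ioo (0:ℝ) 1)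
    (hρ : ρ = α / (β * (1 - α))) :
    -- Part (1)
    ((∀ k p d x : ℕ → ℝ,
      (∀ t, 0 < k t) → (∀ t, 0 < p t) → (∀ t, 0 ≤ d (t + 1)) →
      (∀ t, k (t + 1) = (β * A * (1 - α) * k t ^ α - p t) / G) →
      (∀ t, p (t + 1) = A * α * k (t + 1) ^ (α - 1) / G * p t - d (t + 1)) →
      (∀ t, x t = A * α * k t ^ α / (G * k (t + 1))) →
      ∀ t, ρ < x t ∧ 1 + ρ ≤ x t + ρ / x (t + 1))) ∧
    -- Part (2)
    (∀ k0 : ℝ, 0 < k0 → ∀ x : ℕ → ℝ,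
      (∀ t, ρ < x t) → (∀ t, 1 + ρ ≤ x t + ρ / x (t + 1)) →
      ∀ k p d : ℕ → ℝ, k 0 = k0 →
      (∀ t, k (t + 1) = A * α * k t ^ α / (G * x t)) →
      (∀ t, p t = A * α / ρ * k t ^ α - G * k (t + 1)) →
      (∀ t, d (t + 1) = A * α / G * k (t + 1) ^ (α - 1) * p t - p (t + 1)) →
      (∀ t, 0 < k t) ∧ (∀ t, 0 < p t) ∧ (∀ t, 0 ≤ d (t + 1)) ∧
      (∀ t, k (t + 1) = (β * A * (1 - α) * k t ^ α - p t) / G) ∧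
      (∀ t, p (t + 1) = A * α * k (t + 1) ^ (α - 1) / G * p t - d (t + 1)) ∧
      (∀ t : ℕ, k (t + 1) =
        (A * α / G) ^ ((1 - α ^ (t + 1)) / (1 - α)) * k0 ^ (α ^ (t + 1)) /
          ∏ i ∈ Finset.range (t + 1), x (t - i) ^ (α ^ i)) ∧
      (∀ t, d (t + 1) = A * α / ρ * k (t + 1) ^ α * (x t + ρ / x (t + 1) - 1 - ρ)) ∧
      (∀ t, d (t + 1) / p (t + 1) =
        (x t + ρ / x (t + 1) - 1 - ρ) / (1 - ρ / x (t + 1)))) := by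
  obtain ⟨hα0, hα1⟩ := hα
  obtain ⟨hβ0, -⟩ := hβ
  have hρ0 : 0 < ρ := by
    have : 0 < 1 - α := by linarith
    rw [hρ]
    positivity
  have hc : β * A * (1 - α) = A * α / ρ := by
    rw [hρ]
    field_simp
  refine ⟨fun k p d x hk hp hd hkeq hpeq hx => x_bounds_of_equilibrium hG (by positivity) hρ0
    hk hp hd (fun t => by rw [hkeq, hc]) hpeq hx, ?_⟩
  intro k0 hk0 x hxρ hx_ineq k p d hk00 hkdef hpdef hddef
  have hkrec (t : ℕ) : k (t + 1) = A * α / G * k t ^ α / x t := by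
    rw [hkdef]
    field_simp
  obtain ⟨hk, hp, hd, hdiv, hratio⟩ :=
    equilibrium_of_x_bounds hG (by positivity) hρ0 (hk00 ▸ hk0) hxρ hx_ineq hkrec hpdef hddef
  refine ⟨hk, hp, hd, fun t => ?_, fun t => ?_, fun t => ?_, hdiv, hratio⟩
  · rw [hc, hpdef]
    field_simp
    ring
  · rw [hddef]
    ring
  · rw [rpow_recurrence_eq (by positivity) (hk00 ▸ hk0) (fun t => hρ0.trans (hxρ t)) hkrec,
      geom_sum_eq hα1.ne, hk00, ← neg_div_neg_eq (α ^ (t + 1) - 1), neg_sub, neg_sub]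
end

section
/- Assume G_d < G and that 𝒦 is nonempty and consists of isolated points: for every k ∈ 𝒦 there is ε > 0 with 𝒦 ∩ (k − ε, k + ε) = {k}. Then in any equilibrium with lim_{t→∞} p_t = 0, the sequence (k_t) converges to some k* ∈ {0} ∪ 𝒦. -/
open Filter Topology Set

noncomputable section

section Helpers18

variable {f f' f'' : ℝ → ℝ}

/-- Mean value theorem specialized to functions differentiable on `(0,∞)`. -/
lemma stmt18_mvt_pos {g g' : ℝ → ℝ} (hder : ∀ x > (0:ℝ), HasDerivAt g (g' x) x)
    {a b : ℝ} (ha : 0 < a) (hab : a < b) :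
    ∃ c, a < c ∧ c < b ∧ g b - g a = g' c * (b - a) := by
  have hc : ContinuousOn g (Icc a b) := fun x hx =>
    ((hder x (lt_of_lt_of_le ha hx.1)).continuousAt).continuousWithinAt
  obtain ⟨c, hc1, hc2⟩ := exists_hasDerivAt_eq_slope g g' hab hc
    (fun x hx => hder x (ha.trans hx.1))
  refine ⟨c, hc1.1, hc1.2, ?_⟩
  rw [eq_div_iff (by linarith : b - a ≠ 0)] at hc2
  linarith

/-- `f'` is strictly decreasing on `(0,∞)`. -/
lemma stmt18_f'_anti (hder' : ∀ x > (0:ℝ), HasDerivAt f' (f'' x) x)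
    (hf'' : ∀ x > (0:ℝ), f'' x < 0) :
    ∀ a b : ℝ, 0 < a → a < b → f' b < f' a := by
  intro a b ha hab
  obtain ⟨c, hc1, hc2, hc3⟩ := stmt18_mvt_pos hder' ha hab
  nlinarith [hf'' c (ha.trans hc1)]

/-- `f` is strictly increasing on `(0,∞)`. -/
lemma stmt18_f_mono (hder : ∀ x > (0:ℝ), HasDerivAt f (f' x) x)
    (hf' : ∀ x > (0:ℝ), 0 < f' x) :
    ∀ a b : ℝ, 0 < a → a < b → f a < f b := by
  intro a b ha hab
  obtain ⟨c, hc1, hc2, hc3⟩ := stmt18_mvt_pos hder ha hab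
  nlinarith [hf' c (ha.trans hc1)]

/-- Weak version: `k f'(k) ≤ f(k)` for `k > 0`. -/
lemma stmt18_kfp_le (hpos : ∀ x > (0:ℝ), 0 < f x)
    (hder : ∀ x > (0:ℝ), HasDerivAt f (f' x) x)
    (hder' : ∀ x > (0:ℝ), HasDerivAt f' (f'' x) x)
    (hf' : ∀ x > (0:ℝ), 0 < f' x)
    (hf'' : ∀ x > (0:ℝ), f'' x < 0) :
    ∀ x > (0:ℝ), x * f' x ≤ f x := by
  intro x hx
  have hxf : 0 < x * f' x := mul_pos hx (hf' x hx)
  refine le_of_forall_pos_le_add ?_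
  intro δ hδ
  set ε : ℝ := min (1/2) (δ / (x * f' x)) with hε
  have hε0 : 0 < ε := lt_min (by norm_num) (div_pos hδ hxf)
  have hε1 : ε ≤ 1/2 := min_le_left _ _
  have hεδ : ε * (x * f' x) ≤ δ := by
    have h1 : ε ≤ δ / (x * f' x) := min_le_right _ _
    calc ε * (x * f' x) ≤ (δ / (x * f' x)) * (x * f' x) :=
          mul_le_mul_of_nonneg_right h1 hxf.le
      _ = δ := div_mul_cancel₀ δ hxf.ne'
  have hεx : 0 < ε * x := mul_pos hε0 hx
  have hεxx : ε * x < x := by nlinarith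
  obtain ⟨c, hc1, hc2, hc3⟩ := stmt18_mvt_pos hder hεx hεxx
  have hfc : f' x < f' c := stmt18_f'_anti hder' hf'' c x (hεx.trans hc1) hc2
  have hfε : 0 < f (ε * x) := hpos _ hεx
  nlinarith [mul_pos (sub_pos.2 hfc) (sub_pos.2 hεxx)]

/-- Strict version: `k f'(k) < f(k)` for `k > 0`, i.e. the wage `w(k)` is positive. -/
lemma stmt18_wpos (hpos : ∀ x > (0:ℝ), 0 < f x)
    (hder : ∀ x > (0:ℝ), HasDerivAt f (f' x) x)
    (hder' : ∀ x > (0:ℝ), HasDerivAt f' (f'' x) x)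
    (hf' : ∀ x > (0:ℝ), 0 < f' x)
    (hf'' : ∀ x > (0:ℝ), f'' x < 0) :
    ∀ x > (0:ℝ), 0 < f x - x * f' x := by
  intro x hx
  have hx2 : (0:ℝ) < x / 2 := by linarith
  have hx2x : x / 2 < x := by linarith
  obtain ⟨c, hc1, hc2, hc3⟩ := stmt18_mvt_pos hder hx2 hx2x
  have hfc : f' x < f' c := stmt18_f'_anti hder' hf'' c x (hx2.trans hc1) hc2
  have h1 : (x/2) * f' (x/2) ≤ f (x/2) :=
    stmt18_kfp_le hpos hder hder' hf' hf'' (x/2) hx2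
  have h2 : f' x < f' (x/2) := stmt18_f'_anti hder' hf'' (x/2) x hx2 hx2x
  nlinarith

/-- The wage `w(k) = f(k) - k f'(k)` is strictly increasing on `(0,∞)`. -/
lemma stmt18_wmono (hder : ∀ x > (0:ℝ), HasDerivAt f (f' x) x)
    (hder' : ∀ x > (0:ℝ), HasDerivAt f' (f'' x) x)
    (hf'' : ∀ x > (0:ℝ), f'' x < 0) :
    ∀ a b : ℝ, 0 < a → a < b → f a - a * f' a < f b - b * f' b := by
  intro a b ha hab
  obtain ⟨c, hc1, hc2, hc3⟩ := stmt18_mvt_pos hder ha hab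
  have hfc : f' b < f' c := stmt18_f'_anti hder' hf'' c b (ha.trans hc1) hc2
  have hfab : f' b < f' a := stmt18_f'_anti hder' hf'' a b ha hab
  nlinarith [mul_pos (sub_pos.2 hfc) (sub_pos.2 hab)]

end Helpers18

/-- Lemma `lem:kconverge`: if `G_d < G` and `𝒦` is nonempty with
isolated points, then in any equilibrium with `p_t → 0` the capital sequence
converges to some `k* ∈ {0} ∪ 𝒦`. -/
theorem stmt18 (G : ℝ) (f f' f'' : ℝ → ℝ) (s : ℝ → ℝ → ℝ)
    (hf : ProdAssump G f f' f'') (hs : SavAssump s)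
    (k0 : ℝ) (hk0 : 0 < k0) (d : ℕ → ℝ) (hd : ∀ t ≥ 1, 0 ≤ d t)
    (hGd : GdGrowth G d < (G : EReal))
    (hKne : (Ksteady G f f' s).Nonempty)
    (hKiso : ∀ kk ∈ Ksteady G f f' s, ∃ ε > (0:ℝ),
      Ksteady G f f' s ∩ Set.Ioo (kk - ε) (kk + ε) = {kk})
    (k p : ℕ → ℝ) (heq : IsEquilibrium G f f' s k0 d k p)
    (hp0 : Tendsto p atTop (nhds 0)) :
    ∃ kstar : ℝ, (kstar = 0 ∨ kstar ∈ Ksteady G f f' s) ∧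
      Tendsto k atTop (nhds kstar) := by
  clear hGd hKne hd
  obtain ⟨hG, hfpos, hder, hder', hcont'', hf'pos, hf''neg, hf'0, L, hLG, hL⟩ := hf
  obtain ⟨hscont, hsbnd, hsw, hsR⟩ := hs
  obtain ⟨hkpos, hppos, hk00, hEQ, hP⟩ := heq
  clear hP hf'0 hcont''
  have hanti : ∀ a b : ℝ, 0 < a → a < b → f' b < f' a := stmt18_f'_anti hder' hf''neg
  have hwpos : ∀ x > (0:ℝ), 0 < f x - x * f' x :=
    stmt18_wpos hfpos hder hder' hf'pos hf''neg
  have hwmono : ∀ a b : ℝ, 0 < a → a < b → f a - a * f' a < f b - b * f' b :=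
    stmt18_wmono hder hder' hf''neg
  -- Step 1: boundedness of the capital sequence
  have hL0 : 0 ≤ L :=
    ge_of_tendsto hL (Filter.eventually_atTop.2
      ⟨1, fun x hx => (hf'pos x (by linarith)).le⟩)
  set G' : ℝ := (L + G) / 2 with hG'def
  have hG'pos : 0 < G' := by simp only [hG'def]; linarith
  have hG'G : G' < G := by simp only [hG'def]; linarith
  have hLG' : L < G' := by simp only [hG'def]; linarith
  obtain ⟨k₁, hk₁f, hk₁1⟩ := ((hL.eventually_lt_const hLG').and (eventually_ge_atTop 1)).exists
  have hk₁pos : (0:ℝ) < k₁ := lt_of_lt_of_le one_pos hk₁1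
  set C : ℝ := f k₁ with hCdef
  have hCpos : 0 < C := hfpos k₁ hk₁pos
  have hfub : ∀ x > (0:ℝ), f x ≤ C + G' * x := by
    intro x hx
    rcases le_or_gt x k₁ with h | h
    · rcases eq_or_lt_of_le h with h' | h'
      · rw [h']; nlinarith
      · have := stmt18_f_mono hder hf'pos x k₁ hx h'
        nlinarith
    · obtain ⟨c, hc1, hc2, hc3⟩ := stmt18_mvt_pos hder hk₁pos h
      have hfc : f' c < f' k₁ := hanti k₁ c hk₁pos hc1
      nlinarith [mul_pos hG'pos hk₁pos, mul_le_mul_of_nonneg_right (by linarith : f' c ≤ G')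
        (by linarith : (0:ℝ) ≤ x - k₁)]
  set M : ℝ := max k0 (C / (G - G')) with hMdef
  have hMk0 : k0 ≤ M := le_max_left _ _
  have hMC : C ≤ (G - G') * M := by
    have h1 : C / (G - G') ≤ M := le_max_right _ _
    have h2 : 0 < G - G' := by linarith
    calc C = (G - G') * (C / (G - G')) := by field_simp
      _ ≤ (G - G') * M := mul_le_mul_of_nonneg_left h1 h2.le
  have hkM : ∀ t, k t ≤ M := by
    intro t
    induction t with
    | zero => rw [hk00]; exact hMk0
    | succ t ih =>
      have h1 := hEQ t
      have hw := hwpos (k t) (hkpos t)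
      have hR := hf'pos (k (t+1)) (hkpos (t+1))
      have h2 := (hsbnd _ hw _ hR).2
      have h3 := hfub (k t) (hkpos t)
      have h4 : 0 < k t * f' (k t) := mul_pos (hkpos t) (hf'pos _ (hkpos t))
      have h5 := hppos t
      nlinarith [mul_le_mul_of_nonneg_left ih hG'pos.le]
  have hub : atTop.IsBoundedUnder (· ≤ ·) k := Filter.isBoundedUnder_of ⟨M, hkM⟩
  have hlb : atTop.IsBoundedUnder (· ≥ ·) k :=
    Filter.isBoundedUnder_of ⟨0, fun t => (hkpos t).le⟩
  -- Step 2: liminf and limsup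
  set A : ℝ := atTop.liminf k with hAdef
  set B : ℝ := atTop.limsup k with hBdef
  have hA0 : 0 ≤ A :=
    Filter.le_liminf_of_le hub.isCoboundedUnder_ge
      (Filter.Eventually.of_forall fun t => (hkpos t).le)
  have hAB : A ≤ B := Filter.liminf_le_limsup hub hlb
  -- The key dynamics relation
  have hE : ∀ t, G * k (t+1) - s (f (k t) - k t * f' (k t)) (f' (k (t+1))) = -(p t) := by
    intro t
    have := hEQ t
    linarith
  -- Monotonicity of Φ a x := G x - s (w a) (f' x)
  have hP1 : ∀ a x x' : ℝ, 0 < a → 0 < x → x ≤ x' →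
      G * x - s (f a - a * f' a) (f' x) ≤ G * x' - s (f a - a * f' a) (f' x') := by
    intro a x x' ha hx hxx'
    have hx' : 0 < x' := lt_of_lt_of_le hx hxx'
    have hw := hwpos a ha
    have h1 : f' x' ≤ f' x := by
      rcases eq_or_lt_of_le hxx' with h | h
      · rw [h]
      · exact (hanti x x' hx h).le
    have h2 : s (f a - a * f' a) (f' x') ≤ s (f a - a * f' a) (f' x) :=
      (hsR _ hw) (Set.mem_Ioi.2 (hf'pos x' hx')) (Set.mem_Ioi.2 (hf'pos x hx)) h1
    nlinarith [mul_le_mul_of_nonneg_left hxx' hG.le]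
  have hP2 : ∀ a a' x : ℝ, 0 < a → a ≤ a' → 0 < x →
      G * x - s (f a' - a' * f' a') (f' x) ≤ G * x - s (f a - a * f' a) (f' x) := by
    intro a a' x ha haa' hx
    rcases eq_or_lt_of_le haa' with h | h
    · rw [h]
    · have hwlt := hwmono a a' ha h
      have h2 : s (f a - a * f' a) (f' x) ≤ s (f a' - a' * f' a') (f' x) :=
        ((hsw _ (hf'pos x hx)) (Set.mem_Ioi.2 (hwpos a ha))
          (Set.mem_Ioi.2 (hwpos a' (ha.trans h))) hwlt).le
      linarith
  -- Step 3: every point strictly between A and B is a steady state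
  have hKmem : ∀ c : ℝ, A < c → c < B → c ∈ Ksteady G f f' s := by
    intro c hAc hcB
    have hcpos : 0 < c := lt_of_le_of_lt hA0 hAc
    have hΦ0 : G * c - s (f c - c * f' c) (f' c) = 0 := by
      rcases lt_trichotomy (G * c - s (f c - c * f' c) (f' c)) 0 with hneg | hzero | hposs
      · -- downward crossings of c require a price bounded away from 0
        exfalso
        set δ : ℝ := -(G * c - s (f c - c * f' c) (f' c)) with hδdef
        have hδpos : 0 < δ := by simp only [hδdef]; linarith
        obtain ⟨T, hT⟩ := Filter.eventually_atTop.1 (hp0.eventually_lt_const hδpos)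
        have hfreq : ∃ᶠ t in atTop, c < k t :=
          Filter.frequently_lt_of_lt_limsup hlb.isCoboundedUnder_le hcB
        obtain ⟨t0, ht0c, ht0T⟩ := (hfreq.and_eventually (eventually_ge_atTop T)).exists
        have hstep : ∀ t, t0 ≤ t → c < k t := by
          intro t ht
          induction t, ht using Nat.le_induction with
          | base => exact ht0c
          | succ t ht ih =>
            by_contra hcon
            push_neg at hcon
            have e1 : G * k (t+1) - s (f (k t) - k t * f' (k t)) (f' (k (t+1)))
                ≤ G * k (t+1) - s (f c - c * f' c) (f' (k (t+1))) :=
              hP2 c (k t) (k (t+1)) hcpos ih.le (hkpos (t+1))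
            have e2 : G * k (t+1) - s (f c - c * f' c) (f' (k (t+1)))
                ≤ G * c - s (f c - c * f' c) (f' c) :=
              hP1 c (k (t+1)) c hcpos (hkpos (t+1)) hcon
            have e3 := hE t
            have e4 : δ ≤ p t := by simp only [hδdef] at *; linarith
            have e5 : p t < δ := hT t (le_trans ht0T ht)
            linarith
        have : c ≤ A :=
          Filter.le_liminf_of_le hub.isCoboundedUnder_ge
            (Filter.eventually_atTop.2 ⟨t0, fun t ht => (hstep t ht).le⟩)
        linarith
      · exact hzero
      · -- upward crossings of c are impossible
        exfalso
        obtain ⟨t0, ht0⟩ := (Filter.frequently_lt_of_liminf_lt hub.isCoboundedUnder_ge hAc).exists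
        have hstep : ∀ t, t0 ≤ t → k t ≤ c := by
          intro t ht
          induction t, ht using Nat.le_induction with
          | base => exact ht0.le
          | succ t ht ih =>
            by_contra hcon
            push_neg at hcon
            have e1 : G * k (t+1) - s (f c - c * f' c) (f' (k (t+1)))
                ≤ G * k (t+1) - s (f (k t) - k t * f' (k t)) (f' (k (t+1))) :=
              hP2 (k t) c (k (t+1)) (hkpos t) ih (hkpos (t+1))
            have e2 : G * c - s (f c - c * f' c) (f' c)
                ≤ G * k (t+1) - s (f c - c * f' c) (f' (k (t+1))) :=
              hP1 c c (k (t+1)) hcpos hcpos hcon.le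
            have e3 := hE t
            have e4 := hppos t
            linarith
        have : B ≤ c :=
          Filter.limsup_le_of_le hlb.isCoboundedUnder_le
            (Filter.eventually_atTop.2 ⟨t0, fun t ht => hstep t ht⟩)
        linarith
    exact ⟨hcpos, hcpos, by linarith⟩
  -- Step 4: A = B using isolated steady states
  have hABeq : A = B := by
    by_contra hne
    have hABlt : A < B := lt_of_le_of_ne hAB hne
    set c0 : ℝ := (A + B) / 2 with hc0def
    have hc0a : A < c0 := by simp only [hc0def]; linarith
    have hc0b : c0 < B := by simp only [hc0def]; linarith
    have hc0K := hKmem c0 hc0a hc0b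
    obtain ⟨ε, hε, hiso⟩ := hKiso c0 hc0K
    set c1 : ℝ := (c0 + min (c0 + ε) B) / 2 with hc1def
    have h1 : c0 < min (c0 + ε) B := lt_min (by linarith) hc0b
    have h2 := min_le_left (c0 + ε) B
    have h3 := min_le_right (c0 + ε) B
    have hc1a : c0 < c1 := by simp only [hc1def]; linarith
    have hc1b : c1 < c0 + ε := by simp only [hc1def]; linarith
    have hc1c : c1 < B := by simp only [hc1def]; linarith
    have hc1K := hKmem c1 (by linarith) hc1c
    have hmem : c1 ∈ Ksteady G f f' s ∩ Set.Ioo (c0 - ε) (c0 + ε) :=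
      ⟨hc1K, by constructor <;> linarith⟩
    rw [hiso] at hmem
    have : c1 = c0 := hmem
    linarith
  have hTend : Tendsto k atTop (nhds A) :=
    tendsto_of_liminf_eq_limsup hAdef.symm (by rw [← hBdef, ← hABeq]) hub hlb
  -- Step 5: identify the limit
  rcases eq_or_lt_of_le hA0 with h0 | hApos
  · exact ⟨A, Or.inl h0.symm, hTend⟩
  · refine ⟨A, Or.inr ?_, hTend⟩
    have hT1 : Tendsto (fun t => k (t+1)) atTop (nhds A) :=
      hTend.comp (tendsto_add_atTop_nat 1)
    have hfc : ContinuousAt f A := (hder A hApos).continuousAt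
    have hf'c : ContinuousAt f' A := (hder' A hApos).continuousAt
    have hwT : Tendsto (fun t => f (k t) - k t * f' (k t)) atTop
        (nhds (f A - A * f' A)) :=
      (hfc.tendsto.comp hTend).sub (hTend.mul (hf'c.tendsto.comp hTend))
    have hRT : Tendsto (fun t => f' (k (t+1))) atTop (nhds (f' A)) :=
      hf'c.tendsto.comp hT1
    have hmem : ((f A - A * f' A, f' A) : ℝ × ℝ) ∈ Ioi (0:ℝ) ×ˢ Ioi (0:ℝ) :=
      ⟨hwpos A hApos, hf'pos A hApos⟩
    have hsc : ContinuousAt (fun wR : ℝ × ℝ => s wR.1 wR.2) (f A - A * f' A, f' A) :=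
      hscont.continuousAt ((isOpen_Ioi.prod isOpen_Ioi).mem_nhds hmem)
    have hsT : Tendsto (fun t => s (f (k t) - k t * f' (k t)) (f' (k (t+1)))) atTop
        (nhds (s (f A - A * f' A) (f' A))) :=
      hsc.tendsto.comp (hwT.prodMk_nhds hRT)
    have hlhs : Tendsto (fun t => G * k (t+1) + p t) atTop (nhds (G * A + 0)) :=
      (hT1.const_mul G).add hp0
    have heqfun : (fun t => G * k (t+1) + p t)
        = fun t => s (f (k t) - k t * f' (k t)) (f' (k (t+1))) := funext hEQ
    rw [heqfun] at hlhs
    have hfin : G * A + 0 = s (f A - A * f' A) (f' A) := tendsto_nhds_unique hlhs hsT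
    exact ⟨hApos, hApos, hfin⟩

end
end

section
/- Let (q_t)_{t≥0}, (P_t)_{t≥0}, (D_t)_{t≥1} be sequences with q_t > 0, P_t > 0, D_t ≥ 0 satisfying the no-arbitrage relation q_t·P_t = q_{t+1}·(P_{t+1} + D_{t+1}) for all t ≥ 0. Then the limit lim_{T→∞} q_T·P_T exists, and it is strictly positive if and only if ∑_{t=1}^∞ D_t/P_t < ∞. -/
open Filter Topology Set

private lemma one_add_sum_le_prod (d : ℕ → ℝ) (hd : ∀ t, 0 ≤ d t) (T : ℕ) :
    1 + ∑ t ∈ Finset.range T, d t ≤ ∏ t ∈ Finset.range T, (1 + d t) := by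
  induction T with
  | zero => simp
  | succ T ih =>
    rw [Finset.sum_range_succ, Finset.prod_range_succ]
    have h1 : 0 ≤ ∑ t ∈ Finset.range T, d t := Finset.sum_nonneg fun t _ => hd t
    nlinarith [hd T]

/-- Lemma `lem:bubble`, bubble characterization, Montrucchio:
under the no-arbitrage relation `q_t P_t = q_{t+1}(P_{t+1} + D_{t+1})` with
`q_t, P_t > 0` and `D_t ≥ 0`, the limit `lim_{T→∞} q_T P_T` exists, and it is
strictly positive if and only if `∑_{t≥1} D_t/P_t < ∞`. -/
theorem stmt19 (q P D : ℕ → ℝ)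
    (hq : ∀ t, 0 < q t) (hP : ∀ t, 0 < P t) (hD : ∀ t, 0 ≤ D (t + 1))
    (hna : ∀ t : ℕ, q t * P t = q (t + 1) * (P (t + 1) + D (t + 1))) :
    ∃ L : ℝ, Tendsto (fun T => q T * P T) atTop (nhds L) ∧
      (0 < L ↔ Summable (fun t : ℕ => D (t + 1) / P (t + 1))) := by
  set a : ℕ → ℝ := fun t => q t * P t with ha
  set d : ℕ → ℝ := fun t => D (t + 1) / P (t + 1) with hdd
  have hapos : ∀ t, 0 < a t := fun t => mul_pos (hq t) (hP t)
  have hdnn : ∀ t, 0 ≤ d t := fun t => div_nonneg (hD t) (hP (t + 1)).le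
  have key : ∀ t, a t = a (t + 1) * (1 + d t) := by
    intro t
    have hPpos := (hP (t + 1)).ne'
    simp only [ha, hdd]
    rw [hna t]
    field_simp
  have hprod : ∀ T, a T * ∏ t ∈ Finset.range T, (1 + d t) = a 0 := by
    intro T
    induction T with
    | zero => simp
    | succ T ih =>
      rw [Finset.prod_range_succ, show a (T + 1) * ((∏ t ∈ Finset.range T, (1 + d t)) * (1 + d T))
        = (a (T + 1) * (1 + d T)) * ∏ t ∈ Finset.range T, (1 + d t) by ring, ← key T, ih]
  have hanti : Antitone a := antitone_nat_of_succ_le fun t => by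
    nlinarith [key t, hapos (t + 1), hdnn t]
  have hbdd : BddBelow (Set.range a) := ⟨0, fun x ⟨t, ht⟩ => ht ▸ (hapos t).le⟩
  refine ⟨⨅ t, a t, tendsto_atTop_ciInf hanti hbdd, ?_, ?_⟩
  · -- 0 < L → summable
    intro hL
    apply summable_of_sum_range_le hdnn (c := a 0 / ⨅ t, a t)
    intro T
    have hLle : (⨅ t, a t) ≤ a T := ciInf_le hbdd T
    have h1 : 1 + ∑ t ∈ Finset.range T, d t ≤ ∏ t ∈ Finset.range T, (1 + d t) :=
      one_add_sum_le_prod d hdnn T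
    have h2 : ∏ t ∈ Finset.range T, (1 + d t) = a 0 / a T := by
      field_simp [(hapos T).ne']
      linarith [hprod T]
    have h3 : a 0 / a T ≤ a 0 / ⨅ t, a t :=
      div_le_div_of_nonneg_left (hapos 0).le hL hLle
    nlinarith [Finset.sum_nonneg fun t (_ : t ∈ Finset.range T) => hdnn t]
  · -- summable → 0 < L
    intro hs
    have hC : ∀ T, ∑ t ∈ Finset.range T, d t ≤ ∑' t, d t := fun T =>
      Summable.sum_le_tsum _ (fun t _ => hdnn t) hs
    have hprodle : ∀ T, ∏ t ∈ Finset.range T, (1 + d t) ≤ Real.exp (∑' t, d t) := by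
      intro T
      calc ∏ t ∈ Finset.range T, (1 + d t) ≤ ∏ t ∈ Finset.range T, Real.exp (d t) :=
            Finset.prod_le_prod (fun t _ => by linarith [hdnn t]) fun t _ => by
              linarith [Real.add_one_le_exp (d t)]
        _ = Real.exp (∑ t ∈ Finset.range T, d t) := (Real.exp_sum _ _).symm
        _ ≤ Real.exp (∑' t, d t) := Real.exp_le_exp.2 (hC T)
    have hlow : ∀ T, a 0 / Real.exp (∑' t, d t) ≤ a T := by
      intro T
      have hSpos : 0 < ∏ t ∈ Finset.range T, (1 + d t) :=
        Finset.prod_pos fun t _ => by linarith [hdnn t]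
      rw [div_le_iff₀ (Real.exp_pos _), ← hprod T]
      exact mul_le_mul_of_nonneg_left (hprodle T) (hapos T).le
    have : 0 < a 0 / Real.exp (∑' t, d t) := div_pos (hapos 0) (Real.exp_pos _)
    exact lt_of_lt_of_le this (le_ciInf hlow)
end
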